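/- Let n ≥ 3 and let N, N' be unrooted binary proper phylogenetic networks on n leaves, N having reticulation number r, such that a single PR^- move removing an edge e of N yields N'. Then there exists an NNI^0-sequence followed by one NNI^- that transforms N into N' by only moving and removing e, whose total length is O(n + r); moreover if neither N nor N' contains parallel edges, then neither do the intermediate networks. -/

import Mathlib

/-!
Formalization framework: unrooted binary proper phylogenetic networks as
multigraphs on vertex set ⊆ ℕ, with leaves labelled 1,…,n, together with
the rearrangement operations NNI, PR, TBR and the induced distances.
-/

/-- An undirected multigraph with natural-number vertices: a finite vertex set
and a multiset of edges (unordered pairs); parallel edges are allowed. -/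
structure MGraph where
  V : Finset ℕ
  E : Multiset (Sym2 ℕ)

namespace MGraph

/-- Degree of a vertex: number of edges containing it (graphs are loopless). -/
def deg (G : MGraph) (v : ℕ) : ℕ :=
  Multiset.card (G.E.filter (fun e => v ∈ e))

/-- Adjacency. -/
def Adj (G : MGraph) (u v : ℕ) : Prop := s(u, v) ∈ G.E

/-- Reachability. -/
def Reach (G : MGraph) : ℕ → ℕ → Prop := Relation.ReflTransGen G.Adj

/-- Connectivity. -/
def Conn (G : MGraph) : Prop := ∀ u ∈ G.V, ∀ v ∈ G.V, G.Reach u v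

/-- Delete one copy of an edge. -/
def deleteEdge (G : MGraph) (e : Sym2 ℕ) : MGraph := ⟨G.V, G.E.erase e⟩

/-- A cut-edge: its removal disconnects the graph. -/
def IsCutEdge (G : MGraph) (e : Sym2 ℕ) : Prop :=
  e ∈ G.E ∧ ¬ (G.deleteEdge e).Conn

/-- A leaf: a vertex of degree one. -/
def IsLeaf (G : MGraph) (v : ℕ) : Prop := v ∈ G.V ∧ G.deg v = 1

/-- Proper: every cut-edge separates two (labelled) leaves, i.e. both
components after its removal contain a leaf. -/
def Proper (G : MGraph) : Prop :=
  ∀ u v : ℕ, G.IsCutEdge s(u, v) →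
    (∃ x, G.IsLeaf x ∧ (G.deleteEdge s(u, v)).Reach u x) ∧
    (∃ y, G.IsLeaf y ∧ (G.deleteEdge s(u, v)).Reach v y)

/-- No loops. -/
def Loopless (G : MGraph) : Prop := ∀ e ∈ G.E, ¬ e.IsDiag

/-- All edge endpoints are vertices. -/
def EdgesIn (G : MGraph) : Prop := ∀ e ∈ G.E, ∀ x ∈ e, x ∈ G.V

/-- An unrooted binary phylogenetic network on leaves {1,…,n}
(possibly improper): connected loopless multigraph, every vertex has degree
1 or 3, and the degree-one vertices (leaves) are exactly the labels 1,…,n. -/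
def IsPreNetwork (n : ℕ) (G : MGraph) : Prop :=
  G.EdgesIn ∧ G.Loopless ∧ G.Conn ∧ G.V.Nonempty ∧
  (∀ v ∈ G.V, G.deg v = 1 ∨ G.deg v = 3) ∧
  G.V.filter (fun v => G.deg v = 1) = Finset.Icc 1 n

/-- An unrooted binary proper phylogenetic network on leaves {1,…,n}. -/
def IsNetwork (n : ℕ) (G : MGraph) : Prop := IsPreNetwork n G ∧ G.Proper

/-- Reticulation number: |E| - (|V| - 1). -/
def retic (G : MGraph) : ℕ := Multiset.card G.E + 1 - G.V.card

/-- A network in tier r: reticulation number exactly r. -/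
def IsNetworkR (n r : ℕ) (G : MGraph) : Prop :=
  IsNetwork n G ∧ Multiset.card G.E + 1 = G.V.card + r

/-- An unrooted binary phylogenetic tree on leaves {1,…,n}. -/
def IsTree (n : ℕ) (G : MGraph) : Prop := IsNetworkR n 0 G

/-- G has a pair of parallel edges. -/
def HasParallel (G : MGraph) : Prop := ∃ e : Sym2 ℕ, 1 < G.E.count e

/-- Subdivide the edge {x,y} with the new vertex u. -/
def SubdivEdge (G : MGraph) (x y u : ℕ) (G' : MGraph) : Prop :=
  s(x, y) ∈ G.E ∧ u ∉ G.V ∧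
  G'.V = insert u G.V ∧ G'.E = s(x, u) ::ₘ s(u, y) ::ₘ G.E.erase s(x, y)

/-- Subdivide some edge. -/
def Subdiv (G G' : MGraph) : Prop := ∃ x y u, SubdivEdge G x y u G'

/-- Suppress a degree-two vertex v with incident edges {v,a},{v,b}. -/
def Suppress (G : MGraph) (v : ℕ) (G' : MGraph) : Prop :=
  ∃ a b : ℕ, G.E.filter (fun e => v ∈ e) = (s(v, a) ::ₘ {s(v, b)}) ∧
    G'.V = G.V.erase v ∧
    G'.E = s(a, b) ::ₘ ((G.E.erase s(v, a)).erase s(v, b))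

/-- Remove the edge {x,y}: delete it and suppress the two resulting
degree-two endpoints. -/
def RemoveEdge (G : MGraph) (x y : ℕ) (G' : MGraph) : Prop :=
  s(x, y) ∈ G.E ∧
  ∃ G₁ : MGraph, Suppress (G.deleteEdge s(x, y)) x G₁ ∧ Suppress G₁ y G'

/-- TBR⁺: subdivide two edges with new vertices u, v and add the edge {u,v}. -/
def TBRplus (G G' : MGraph) : Prop :=
  ∃ (x y u x' y' v : ℕ) (G₁ G₂ : MGraph),
    SubdivEdge G x y u G₁ ∧ SubdivEdge G₁ x' y' v G₂ ∧
    G'.V = G₂.V ∧ G'.E = s(u, v) ::ₘ G₂.E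

/-- TBR⁻: remove an edge. -/
def TBRminus (G G' : MGraph) : Prop := ∃ x y, RemoveEdge G x y G'

/-- TBR⁰: either remove an internal edge and reconnect via a new edge between
two subdivision points, or prune an external edge at its internal endpoint and
regraft it. -/
def TBRzero (G G' : MGraph) : Prop :=
  (∃ x y : ℕ, ¬ G.IsLeaf x ∧ ¬ G.IsLeaf y ∧
    ∃ G₁ : MGraph, RemoveEdge G x y G₁ ∧
    ∃ (a b u c d v : ℕ) (G₂ G₃ : MGraph),
      SubdivEdge G₁ a b u G₂ ∧ SubdivEdge G₂ c d v G₃ ∧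
      G'.V = G₃.V ∧ G'.E = s(u, v) ::ₘ G₃.E) ∨
  (∃ u v : ℕ, G.IsLeaf v ∧ s(u, v) ∈ G.E ∧
    ∃ G₁ : MGraph, Suppress (G.deleteEdge s(u, v)) u G₁ ∧
    ∃ (a b w : ℕ) (G₂ : MGraph), SubdivEdge G₁ a b w G₂ ∧
      G'.V = G₂.V ∧ G'.E = s(w, v) ::ₘ G₂.E)

/-- PR⁰ pruning the edge {u,v} at u and regrafting that end. -/
def PRzeroAt (G : MGraph) (u v : ℕ) (G' : MGraph) : Prop :=
  s(u, v) ∈ G.E ∧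
  ∃ G₁ : MGraph, Suppress (G.deleteEdge s(u, v)) u G₁ ∧
  ∃ (a b w : ℕ) (G₂ : MGraph), SubdivEdge G₁ a b w G₂ ∧
    G'.V = G₂.V ∧ G'.E = s(w, v) ::ₘ G₂.E

/-- PR⁰: prune an edge at one endpoint and regraft it. -/
def PRzero (G G' : MGraph) : Prop := ∃ u v, PRzeroAt G u v G'

/-- NNI⁰ along an internal axis edge {u,v}: prune the edge f = {u,a} (f ≠ axis)
at u and regraft it to an edge {v,b} (≠ axis) incident to v; f' = {w,a} is the
resulting moved edge. -/
def NNIzeroAt (G : MGraph) (f : Sym2 ℕ) (G' : MGraph) (f' : Sym2 ℕ) : Prop :=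
  ∃ (u v a b w : ℕ) (G₁ G₂ : MGraph),
    f = s(u, a) ∧ f' = s(w, a) ∧
    s(u, a) ∈ G.E ∧ s(u, v) ∈ G.E.erase s(u, a) ∧
    ¬ G.IsLeaf u ∧ ¬ G.IsLeaf v ∧ a ≠ v ∧ b ≠ u ∧
    Suppress (G.deleteEdge s(u, a)) u G₁ ∧
    SubdivEdge G₁ v b w G₂ ∧
    G'.V = G₂.V ∧ G'.E = s(w, a) ::ₘ G₂.E

/-- NNI⁰. -/
def NNIzero (G G' : MGraph) : Prop := ∃ f f', NNIzeroAt G f G' f'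

/-- NNI⁺: subdivide two adjacent edges and join the subdivision points. -/
def NNIplus (G G' : MGraph) : Prop :=
  ∃ (x y z u v : ℕ) (G₁ G₂ : MGraph),
    s(x, y) ∈ G.E ∧ s(x, z) ∈ G.E.erase s(x, y) ∧
    SubdivEdge G x y u G₁ ∧ SubdivEdge G₁ x z v G₂ ∧
    G'.V = G₂.V ∧ G'.E = s(u, v) ::ₘ G₂.E

/-- NNI⁻ removing the triangle edge f. -/
def NNIminusAt (G : MGraph) (f : Sym2 ℕ) (G' : MGraph) : Prop :=
  ∃ x y z : ℕ, f = s(x, y) ∧ s(x, z) ∈ G.E ∧ s(y, z) ∈ G.E ∧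
    RemoveEdge G x y G'

/-- NNI⁻: remove an edge of a triangle. -/
def NNIminus (G G' : MGraph) : Prop := ∃ f, NNIminusAt G f G'

/-- An NNI operation. -/
def NNI (G G' : MGraph) : Prop := NNIzero G G' ∨ NNIplus G G' ∨ NNIminus G G'

/-- A PR operation. -/
def PR (G G' : MGraph) : Prop := PRzero G G' ∨ TBRplus G G' ∨ TBRminus G G'

/-- A TBR operation. -/
def TBR (G G' : MGraph) : Prop := TBRzero G G' ∨ TBRplus G G' ∨ TBRminus G G'

/-- A length-k sequence of R-steps, all intermediate (and final) objects
satisfying the class predicate C. -/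
def SeqOn {α : Type} (R : α → α → Prop) (C : α → Prop) : ℕ → α → α → Prop
  | 0, a, b => a = b
  | k + 1, a, b => ∃ x, R a x ∧ C x ∧ SeqOn R C k x b

/-- The induced distance: length of a shortest R-sequence within the class C. -/
noncomputable def rdist (R : MGraph → MGraph → Prop) (C : MGraph → Prop)
    (G G' : MGraph) : ℕ :=
  sInf {k : ℕ | SeqOn R C k G G'}

/-- Subgraph (respecting vertex names, hence leaf labels). -/
def Subgraph (H G : MGraph) : Prop := H.V ⊆ G.V ∧ H.E ≤ G.E

/-- N displays M: some subdivision of M is a subgraph of N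
(labelled leaves are fixed natural numbers, so labels are respected). -/
def Displays (N M : MGraph) : Prop :=
  ∃ M', Relation.ReflTransGen Subdiv M M' ∧ Subgraph M' N

end MGraph

open MGraph

/-!
Undo the removal: `N` arises from `Q`, which is `N'` with an edge `{c₁, c₂}` subdivided by `y`, by
subdividing an edge `{p, q}` of `Q` with `x` and joining `x` to `y`. An NNI⁰ move along the axis
`{x, q}` re-attaches `x` to another edge `{q, b}` of `Q`; following a path from `q` to `y` in `Q`
brings `x` next to `y`, where `{x, y}` lies in a triangle and an NNI⁻ move removes it. Every
intermediate graph arises from `N'` by a TBR⁺ move and has as many vertices and edges as `N`, so it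
is a proper network of the same tier, without parallel edges when `N'` has none; the path has
fewer than `|V(N)| ≤ 2(n + r)` edges.

If `p = y`, so that `{x, y}` is a double edge, a single move onto some `{q, b}` with `b ≠ y`
already creates the triangle. If neither `p` nor `q` is a non-leaf other than `y`, then, as `n ≥ 3`
forbids adjacent leaves, one of them is `y` and the other a leaf, and the argument applies with the
roles of `x` and `y` exchanged.
-/

namespace MGraph

variable {G H G' N N₁ N' : MGraph} {n r a b c d c₁ c₂ p q s t u v w x y z k : ℕ}
  {e e₁ f : Sym2 ℕ} {D : MGraph → Prop}

/-! ### Subdividing and adding edges -/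

@[ext]
theorem ext (hV : G.V = H.V) (hE : G.E = H.E) : G = H := by
  cases G; cases H; congr

def subdivide (G : MGraph) (a b u : ℕ) : MGraph :=
  ⟨insert u G.V, s(a, u) ::ₘ s(u, b) ::ₘ G.E.erase s(a, b)⟩

def addEdge (G : MGraph) (e : Sym2 ℕ) : MGraph := ⟨G.V, e ::ₘ G.E⟩

def graft (G : MGraph) (p q w y : ℕ) : MGraph := (G.subdivide p q w).addEdge s(w, y)

theorem subdivide_comm (G : MGraph) (a b u : ℕ) : G.subdivide a b u = G.subdivide b a u := by
  ext1
  · rfl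
  · simp only [subdivide, Sym2.eq_swap, Multiset.cons_swap]

theorem graft_comm (G : MGraph) (p q w y : ℕ) : G.graft p q w y = G.graft q p w y := by
  rw [graft, subdivide_comm, graft]

theorem subdivEdge_subdivide (h : s(a, b) ∈ G.E) (hu : u ∉ G.V) :
    SubdivEdge G a b u (G.subdivide a b u) :=
  ⟨h, hu, rfl, rfl⟩

theorem addEdge_deleteEdge (he : e ∈ G.E) : (G.deleteEdge e).addEdge e = G :=
  ext rfl (Multiset.cons_erase he)

theorem deleteEdge_addEdge (G : MGraph) (e : Sym2 ℕ) : (G.addEdge e).deleteEdge e = G :=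
  ext rfl (Multiset.erase_cons_head _ _)

theorem EdgesIn.not_mem_of_not_mem (hG : G.EdgesIn) (hu : u ∉ G.V) (he : e ∈ G.E) : u ∉ e :=
  fun h => hu (hG e he u h)

theorem EdgesIn.ne_of_mem (hG : G.EdgesIn) (hu : u ∉ G.V) (he : s(a, b) ∈ G.E) :
    a ≠ u ∧ b ≠ u :=
  ⟨fun h => hu (h ▸ hG _ he a (Sym2.mem_mk_left a b)),
    fun h => hu (h ▸ hG _ he b (Sym2.mem_mk_right a b))⟩

theorem Loopless.ne (hG : G.Loopless) (he : s(a, b) ∈ G.E) : a ≠ b :=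
  fun h => hG _ he (Sym2.mk_isDiag_iff.2 h)

theorem mem_of_mem_subdivide (h : s(c, d) ∈ (G.subdivide a b u).E) (hc : c ≠ u)
    (hd : d ≠ u) : s(c, d) ∈ G.E := by
  simp only [subdivide, Multiset.mem_cons, Sym2.eq_iff] at h
  rcases h with h | h | h
  · exact absurd h (by tauto)
  · exact absurd h (by tauto)
  · exact Multiset.mem_of_mem_erase h

theorem edgesIn_subdivide (hG : G.EdgesIn) (he : s(a, b) ∈ G.E) : (G.subdivide a b u).EdgesIn := by
  intro f hf x hx
  simp only [subdivide, Multiset.mem_cons] at hf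
  rcases hf with rfl | rfl | hf
  · rcases Sym2.mem_iff.1 hx with rfl | rfl
    exacts [Finset.mem_insert_of_mem (hG _ he x (Sym2.mem_mk_left _ _)), Finset.mem_insert_self _ _]
  · rcases Sym2.mem_iff.1 hx with rfl | rfl
    exacts [Finset.mem_insert_self _ _,
      Finset.mem_insert_of_mem (hG _ he x (Sym2.mem_mk_right _ _))]
  · exact Finset.mem_insert_of_mem (hG f (Multiset.mem_of_mem_erase hf) x hx)

theorem loopless_subdivide (hG : G.Loopless) (ha : a ≠ u) (hb : b ≠ u) :
    (G.subdivide a b u).Loopless := by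
  intro f hf
  simp only [subdivide, Multiset.mem_cons] at hf
  rcases hf with rfl | rfl | hf
  · exact Sym2.mk_isDiag_iff.not.2 ha
  · exact Sym2.mk_isDiag_iff.not.2 hb.symm
  · exact hG f (Multiset.mem_of_mem_erase hf)

theorem edgesIn_addEdge (hG : G.EdgesIn) (ha : a ∈ G.V) (hb : b ∈ G.V) :
    (G.addEdge s(a, b)).EdgesIn := by
  intro f hf x hx
  rcases Multiset.mem_cons.1 hf with rfl | hf
  · rcases Sym2.mem_iff.1 hx with rfl | rfl <;> assumption
  · exact hG f hf x hx

theorem loopless_addEdge (hG : G.Loopless) (hab : a ≠ b) : (G.addEdge s(a, b)).Loopless := by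
  intro f hf
  rcases Multiset.mem_cons.1 hf with rfl | hf
  exacts [Sym2.mk_isDiag_iff.not.2 hab, hG f hf]

/-! ### Degrees -/

theorem deg_addEdge (G : MGraph) (e : Sym2 ℕ) (v : ℕ) :
    (G.addEdge e).deg v = G.deg v + if v ∈ e then 1 else 0 := by
  simp only [deg, addEdge, Multiset.filter_cons, Multiset.card_add]
  split_ifs <;> simp [add_comm]

theorem deg_subdivide_of_ne (he : s(a, b) ∈ G.E) (hab : a ≠ b) (hv : v ≠ u) :
    (G.subdivide a b u).deg v = G.deg v := by
  conv_rhs => rw [deg, ← Multiset.cons_erase he]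
  simp only [deg, subdivide, Multiset.filter_cons, Multiset.card_add, Sym2.mem_iff]
  by_cases hva : v = a <;> by_cases hvb : v = b <;> simp_all

theorem deg_subdivide_self (hG : G.EdgesIn) (hu : u ∉ G.V) : (G.subdivide a b u).deg u = 2 := by
  have : (G.E.erase s(a, b)).filter (u ∈ ·) = 0 :=
    Multiset.filter_eq_nil.2 fun e he => hG.not_mem_of_not_mem hu (Multiset.mem_of_mem_erase he)
  simp [deg, subdivide, this]

theorem eq_of_deg_eq_one (hv : G.deg v = 1) (he : e ∈ G.E) (hf : f ∈ G.E)
    (hve : v ∈ e) (hvf : v ∈ f) : e = f := by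
  obtain ⟨g, hg⟩ := Multiset.card_eq_one.1 hv
  have he' : e ∈ G.E.filter (v ∈ ·) := Multiset.mem_filter.2 ⟨he, hve⟩
  have hf' : f ∈ G.E.filter (v ∈ ·) := Multiset.mem_filter.2 ⟨hf, hvf⟩
  rw [hg, Multiset.mem_singleton] at he' hf'
  rw [he', hf']

theorem exists_mem_ne_of_deg_eq_three (hq : G.deg q = 3) (hy : G.deg y = 2) :
    ∃ b, s(q, b) ∈ G.E ∧ b ≠ y := by
  by_contra! h
  have hrep : G.E.filter (q ∈ ·) = Multiset.replicate 3 s(q, y) := by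
    refine Multiset.eq_replicate.2 ⟨hq, fun e he => ?_⟩
    obtain ⟨he, hqe⟩ := Multiset.mem_filter.1 he
    obtain ⟨b, rfl⟩ := Sym2.mem_iff_exists.1 hqe
    rw [h b he]
  have hle : Multiset.replicate 3 s(q, y) ≤ G.E.filter (y ∈ ·) :=
    Multiset.le_filter.2 ⟨hrep ▸ Multiset.filter_le _ _,
      fun e he => Multiset.eq_of_mem_replicate he ▸ Sym2.mem_mk_right q y⟩
  have := Multiset.card_le_card hle
  rw [Multiset.card_replicate] at this
  exact absurd (this.trans hy.le) (by norm_num)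

theorem sum_deg_le (G : MGraph) : ∑ v ∈ G.V, G.deg v ≤ 2 * Multiset.card G.E := by
  obtain ⟨V, E⟩ := G
  simp only [deg]
  induction E using Multiset.induction_on with
  | empty => simp
  | cons e E ih =>
    have he : (V.filter (· ∈ e)).card ≤ 2 := by
      induction e using Sym2.ind with
      | h a b =>
        refine (Finset.card_le_card fun v hv => ?_).trans (Finset.card_le_two (a := a) (b := b))
        simpa using (Finset.mem_filter.1 hv).2
    simp only [Multiset.filter_cons, Multiset.card_add, Finset.sum_add_distrib,
      Multiset.card_cons, apply_ite Multiset.card, Multiset.card_singleton,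
      Multiset.card_zero, ← Finset.card_filter] at ih ⊢
    omega

/-! ### Connectivity and paths -/

theorem adj_comm : G.Adj u v ↔ G.Adj v u := by
  rw [Adj, Adj, Sym2.eq_swap]

theorem Reach.symm (h : G.Reach u v) : G.Reach v u := by
  induction h with
  | refl => exact .refl
  | tail _ hcd ih => exact .head (adj_comm.1 hcd) ih

theorem Reach.lift (hAdj : ∀ c d, G.Adj c d → H.Reach c d) (h : G.Reach u v) : H.Reach u v :=
  Relation.ReflTransGen.lift' id hAdj u v h

theorem Conn.of_adj_reach (hG : G.Conn) (hAdj : ∀ c d, G.Adj c d → H.Reach c d)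
    (hV : ∀ v ∈ H.V, ∃ v₀ ∈ G.V, H.Reach v₀ v) : H.Conn := by
  intro s hs t ht
  obtain ⟨s₀, hs₀, hs⟩ := hV s hs
  obtain ⟨t₀, ht₀, ht⟩ := hV t ht
  exact hs.symm.trans (((hG s₀ hs₀ t₀ ht₀).lift hAdj).trans ht)

theorem conn_addEdge (hG : G.Conn) (e : Sym2 ℕ) : (G.addEdge e).Conn :=
  hG.of_adj_reach (fun _ _ h => .single (Multiset.mem_cons_of_mem h))
    fun v hv => ⟨v, hv, .refl⟩

theorem reach_subdivide (h : G.Reach s t) : (G.subdivide a b u).Reach s t := by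
  have hau : (G.subdivide a b u).Adj a u := Multiset.mem_cons_self _ _
  have hub : (G.subdivide a b u).Adj u b := Multiset.mem_cons_of_mem (Multiset.mem_cons_self _ _)
  refine h.lift fun c d hcd => ?_
  by_cases hab : s(c, d) = s(a, b)
  · rcases Sym2.eq_iff.1 hab with ⟨rfl, rfl⟩ | ⟨rfl, rfl⟩
    · exact .head hau (.single hub)
    · exact .head (adj_comm.1 hub) (.single (adj_comm.1 hau))
  · exact .single (Multiset.mem_cons_of_mem (Multiset.mem_cons_of_mem
      ((Multiset.mem_erase_of_ne hab).2 hcd)))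

theorem conn_subdivide (hG : G.Conn) (hb : b ∈ G.V) : (G.subdivide a b u).Conn := by
  refine hG.of_adj_reach (fun _ _ h => reach_subdivide (.single h)) fun v hv => ?_
  rcases Finset.mem_insert.1 hv with rfl | hv
  · exact ⟨b, hb, .single (adj_comm.1 (Multiset.mem_cons_of_mem (Multiset.mem_cons_self _ _)))⟩
  · exact ⟨v, hv, .refl⟩

abbrev simpleGraph (G : MGraph) : SimpleGraph ℕ := SimpleGraph.fromRel G.Adj

theorem simpleGraph_adj : G.simpleGraph.Adj u v ↔ u ≠ v ∧ G.Adj u v := by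
  rw [SimpleGraph.fromRel_adj, adj_comm (u := v), or_self]

theorem Reach.reachable (h : G.Reach u v) : G.simpleGraph.Reachable u v := by
  induction h with
  | refl => rfl
  | @tail b c _ hbc ih =>
    by_cases hb : b = c
    · exact hb ▸ ih
    · exact ih.trans (simpleGraph_adj.2 ⟨hb, hbc⟩).reachable

theorem EdgesIn.support_subset (hE : G.EdgesIn) (W : G.simpleGraph.Walk u v) (hu : u ∈ G.V) :
    W.support.toFinset ⊆ G.V := by
  induction W with
  | nil => simpa using hu
  | cons h _ ih =>
    rw [SimpleGraph.Walk.support_cons, List.toFinset_cons]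
    exact Finset.insert_subset hu (ih (hE _ (simpleGraph_adj.1 h).2 _ (Sym2.mem_mk_right _ _)))

theorem EdgesIn.length_lt_card (hE : G.EdgesIn) (hu : u ∈ G.V) {W : G.simpleGraph.Walk u v}
    (hW : W.IsPath) : W.length < G.V.card := by
  have := Finset.card_le_card (hE.support_subset W hu)
  rw [List.toFinset_card_of_nodup hW.support_nodup, SimpleGraph.Walk.length_support] at this
  omega

/-! ### Properness -/

theorem proper_iff : G.Proper ↔
    ∀ e, G.IsCutEdge e → ∀ z ∈ e, ∃ x, G.IsLeaf x ∧ (G.deleteEdge e).Reach z x := by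
  refine ⟨fun h e he z hz => ?_, fun h u v he =>
    ⟨h _ he u (Sym2.mem_mk_left u v), h _ he v (Sym2.mem_mk_right u v)⟩⟩
  induction e using Sym2.ind with
  | h u v =>
    rcases Sym2.mem_iff.1 hz with rfl | rfl
    exacts [(h _ _ he).1, (h _ _ he).2]

theorem Proper.of_cutEdge_sim (hG : G.Proper) (hleaf : ∀ x, G.IsLeaf x → H.IsLeaf x)
    (hcut : ∀ e', H.IsCutEdge e' → ∃ e, G.IsCutEdge e ∧
      (∀ c d, (G.deleteEdge e).Adj c d → (H.deleteEdge e').Reach c d) ∧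
      ∀ z ∈ e', ∃ z₀ ∈ e, (H.deleteEdge e').Reach z z₀) :
    H.Proper := by
  rw [proper_iff] at hG ⊢
  intro e' he' z hz
  obtain ⟨e, he, hsim, hmap⟩ := hcut e' he'
  obtain ⟨z₀, hz₀, hzz₀⟩ := hmap z hz
  obtain ⟨x, hx, hz₀x⟩ := hG e he z₀ hz₀
  exact ⟨x, hleaf x hx, hzz₀.trans (hz₀x.lift hsim)⟩

theorem isLeaf_subdivide (he : s(a, b) ∈ G.E) (hab : a ≠ b) (hu : u ∉ G.V) (hx : G.IsLeaf x) :
    (G.subdivide a b u).IsLeaf x :=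
  ⟨Finset.mem_insert_of_mem hx.1,
    (deg_subdivide_of_ne he hab (by rintro rfl; exact hu hx.1)).trans hx.2⟩

theorem isCutEdge_of_subdivide (hb : b ∈ G.V) (he : s(a, b) ∈ G.E)
    (hcut : (G.subdivide a b u).IsCutEdge s(a, u)) :
    G.IsCutEdge s(a, b) ∧
      (∀ c d, (G.deleteEdge s(a, b)).Adj c d → ((G.subdivide a b u).deleteEdge s(a, u)).Reach c d) ∧
      ∀ z ∈ s(a, u), ∃ z₀ ∈ s(a, b), ((G.subdivide a b u).deleteEdge s(a, u)).Reach z z₀ := by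
  have hE : ((G.subdivide a b u).deleteEdge s(a, u)).E = s(u, b) ::ₘ G.E.erase s(a, b) :=
    Multiset.erase_cons_head _ _
  have hub : ((G.subdivide a b u).deleteEdge s(a, u)).Reach u b :=
    .single (by unfold Adj; rw [hE]; exact Multiset.mem_cons_self _ _)
  have hsim : ∀ c d, (G.deleteEdge s(a, b)).Adj c d →
      ((G.subdivide a b u).deleteEdge s(a, u)).Reach c d :=
    fun c d hcd => .single (by unfold Adj; rw [hE]; exact Multiset.mem_cons_of_mem hcd)
  refine ⟨⟨he, fun hC => hcut.2 (hC.of_adj_reach hsim fun v hv => ?_)⟩, hsim, fun z hz => ?_⟩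
  · rcases Finset.mem_insert.1 hv with rfl | hv
    exacts [⟨b, hb, hub.symm⟩, ⟨v, hv, .refl⟩]
  · rcases Sym2.mem_iff.1 hz with rfl | rfl
    exacts [⟨z, Sym2.mem_mk_left _ _, .refl⟩, ⟨b, Sym2.mem_mk_right _ _, hub⟩]

theorem proper_subdivide (hG : G.Proper) (hE : G.EdgesIn) (he : s(a, b) ∈ G.E) (hab : a ≠ b)
    (hu : u ∉ G.V) : (G.subdivide a b u).Proper := by
  have ha : a ∈ G.V := hE _ he a (Sym2.mem_mk_left a b)
  have hb : b ∈ G.V := hE _ he b (Sym2.mem_mk_right a b)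
  refine hG.of_cutEdge_sim (fun x => isLeaf_subdivide he hab hu) fun e' hcut => ?_
  rcases Multiset.mem_cons.1 hcut.1 with rfl | he'
  · exact ⟨_, isCutEdge_of_subdivide hb he hcut⟩
  rcases Multiset.mem_cons.1 he' with rfl | he'
  · rw [subdivide_comm, Sym2.eq_swap] at hcut ⊢
    rw [Sym2.eq_swap] at he
    exact ⟨_, isCutEdge_of_subdivide ha he hcut⟩
  have hue : u ∉ e' := hE.not_mem_of_not_mem hu (Multiset.mem_of_mem_erase he')
  have hdel : (G.subdivide a b u).deleteEdge e' = (G.deleteEdge e').subdivide a b u := by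
    refine ext rfl ?_
    simp only [deleteEdge, subdivide]
    rw [Multiset.erase_cons_tail _ (by rintro rfl; exact hue (Sym2.mem_mk_right a u)),
      Multiset.erase_cons_tail _ (by rintro rfl; exact hue (Sym2.mem_mk_left u b)),
      Multiset.erase_comm]
  refine ⟨e', ⟨Multiset.mem_of_mem_erase he', fun hC => hcut.2 ?_⟩,
    fun c d hcd => hdel ▸ reach_subdivide (.single hcd), fun z hz => ⟨z, hz, .refl⟩⟩
  exact hdel ▸ conn_subdivide hC hb

theorem proper_addEdge (hG : G.Proper) (hC : G.Conn) (ha : G.deg a ≠ 1) (hb : G.deg b ≠ 1) :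
    (G.addEdge s(a, b)).Proper := by
  refine hG.of_cutEdge_sim (fun x hx => ⟨hx.1, ?_⟩) fun e' hcut => ?_
  · rw [deg_addEdge, hx.2, if_neg fun hm => ?_]
    rcases Sym2.mem_iff.1 hm with rfl | rfl
    exacts [ha hx.2, hb hx.2]
  by_cases h : e' = s(a, b)
  · subst h
    exact absurd (by rw [deleteEdge_addEdge]; exact hC) hcut.2
  have hdel : (G.addEdge s(a, b)).deleteEdge e' = (G.deleteEdge e').addEdge s(a, b) :=
    ext rfl (Multiset.erase_cons_tail _ (Ne.symm h))
  refine ⟨e', ⟨(Multiset.mem_cons.1 hcut.1).resolve_left h, fun hC' => hcut.2 ?_⟩,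
    fun c d hcd => hdel ▸ .single (Multiset.mem_cons_of_mem hcd), fun z hz => ⟨z, hz, .refl⟩⟩
  exact hdel ▸ conn_addEdge hC' _

/-! ### Networks -/

theorem IsPreNetwork.deg_ne_one_of_adj (hn : 3 ≤ n) (h : IsPreNetwork n G) (hab : s(a, b) ∈ G.E)
    (ha : G.deg a = 1) : G.deg b ≠ 1 := by
  intro hb
  obtain ⟨hE, -, hC, -, -, hleaf⟩ := h
  have hreach : ∀ t, G.Reach a t → t = a ∨ t = b := by
    intro t ht
    induction ht with
    | refl => exact .inl rfl
    | @tail s t _ hst ih =>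
      have hs : G.deg s = 1 := by rcases ih with rfl | rfl <;> assumption
      have hs' : s ∈ s(a, b) := by rcases ih with rfl | rfl <;> simp
      have := eq_of_deg_eq_one hs hst hab (Sym2.mem_mk_left s t) hs'
      exact Sym2.mem_iff.1 (this ▸ Sym2.mem_mk_right s t)
  have hsub : Finset.Icc 1 n ⊆ {a, b} := fun v hv => by
    rw [← hleaf, Finset.mem_filter] at hv
    simpa using hreach v (hC a (hE _ hab a (Sym2.mem_mk_left a b)) v hv.1)
  have := (Finset.card_le_card hsub).trans Finset.card_le_two
  rw [Nat.card_Icc] at this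
  omega

theorem IsNetworkR.card_V_le (h : IsNetworkR n r G) : G.V.card ≤ 2 * (n + r) := by
  obtain ⟨⟨⟨-, -, -, -, hdeg, hleaf⟩, -⟩, hr⟩ := h
  have h3 : ∑ _v ∈ G.V, 3 ≤ ∑ v ∈ G.V, (G.deg v + 2 * if G.deg v = 1 then 1 else 0) :=
    Finset.sum_le_sum fun v hv => by rcases hdeg v hv with h | h <;> simp [h]
  rw [Finset.sum_add_distrib, ← Finset.mul_sum, ← Finset.card_filter, hleaf, Nat.card_Icc,
    Finset.sum_const, smul_eq_mul] at h3
  have := G.sum_deg_le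
  omega

theorem degree_conditions_of_insert (hV : H.V = insert w (insert u G.V)) (hw : H.deg w = 3)
    (hu : H.deg u = 3) (hdeg : ∀ v ∈ G.V, H.deg v = G.deg v)
    (hG : ∀ v ∈ G.V, G.deg v = 1 ∨ G.deg v = 3) :
    (∀ v ∈ H.V, H.deg v = 1 ∨ H.deg v = 3) ∧
      H.V.filter (fun v => H.deg v = 1) = G.V.filter (fun v => G.deg v = 1) := by
  refine ⟨fun v hv => ?_, ?_⟩
  · rw [hV, Finset.mem_insert, Finset.mem_insert] at hv
    rcases hv with rfl | rfl | hv
    exacts [.inr hw, .inr hu, hdeg v hv ▸ hG v hv]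
  · rw [hV, Finset.filter_insert, Finset.filter_insert, if_neg (by omega), if_neg (by omega)]
    exact Finset.filter_congr fun v hv => by rw [hdeg v hv]

/-- A TBR⁺ move. -/
theorem isNetwork_graft (hG : IsNetwork n G) (hab : s(a, b) ∈ G.E) (hu : u ∉ G.V)
    (hpq : s(p, q) ∈ (G.subdivide a b u).E) (hw : w ∉ (G.subdivide a b u).V) :
    IsNetwork n ((G.subdivide a b u).graft p q w u) := by
  obtain ⟨⟨hE, hL, hC, -, hdeg, hleaf⟩, hP⟩ := hG
  set Q := G.subdivide a b u
  have hLQ : Q.Loopless := loopless_subdivide hL (hE.ne_of_mem hu hab).1 (hE.ne_of_mem hu hab).2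
  have hEQ : Q.EdgesIn := edgesIn_subdivide hE hab
  have hEQ' := hEQ.ne_of_mem hw hpq
  have huw : u ≠ w := fun h => hw (h ▸ Finset.mem_insert_self u G.V)
  have hdegu : (Q.subdivide p q w).deg u = 2 := by
    rw [deg_subdivide_of_ne hpq (hLQ.ne hpq) huw, deg_subdivide_self hE hu]
  have hdegw : (Q.subdivide p q w).deg w = 2 := deg_subdivide_self hEQ hw
  have hCQ : (Q.subdivide p q w).Conn :=
    conn_subdivide (conn_subdivide hC (hE _ hab b (Sym2.mem_mk_right a b)))
      (hEQ _ hpq q (Sym2.mem_mk_right p q))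
  have hPQ : (Q.subdivide p q w).Proper :=
    proper_subdivide (proper_subdivide hP hE hab (hL.ne hab) hu) hEQ hpq (hLQ.ne hpq) hw
  obtain ⟨hdeg', hleaf'⟩ := degree_conditions_of_insert (H := Q.graft p q w u) (G := G) rfl
    (by rw [graft, deg_addEdge, hdegw, if_pos (Sym2.mem_mk_left w u)])
    (by rw [graft, deg_addEdge, hdegu, if_pos (Sym2.mem_mk_right w u)])
    (fun v hv => by
      have hvu : v ≠ u := by rintro rfl; exact hu hv
      have hvw : v ≠ w := by rintro rfl; exact hw (Finset.mem_insert_of_mem hv)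
      rw [graft, deg_addEdge, deg_subdivide_of_ne hpq (hLQ.ne hpq) hvw,
        deg_subdivide_of_ne hab (hL.ne hab) hvu, if_neg (by simp [hvu, hvw]), add_zero])
    hdeg
  refine ⟨⟨edgesIn_addEdge (edgesIn_subdivide hEQ hpq) (Finset.mem_insert_self _ _)
      (Finset.mem_insert_of_mem (Finset.mem_insert_self _ _)),
    loopless_addEdge (loopless_subdivide hLQ hEQ'.1 hEQ'.2) huw.symm, conn_addEdge hCQ _,
    Finset.insert_nonempty _ _, hdeg', hleaf'.trans hleaf⟩, ?_⟩
  exact proper_addEdge hPQ hCQ (by omega) (by omega)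

theorem card_E_graft (h : s(p, q) ∈ G.E) (y : ℕ) :
    Multiset.card (G.graft p q w y).E = Multiset.card G.E + 2 := by
  simp [graft, addEdge, subdivide, Multiset.card_erase_of_mem h,
    Nat.sub_one_add_one (Multiset.card_pos_iff_exists_mem.2 ⟨_, h⟩).ne']

theorem card_V_graft (hw : w ∉ G.V) (p q y : ℕ) : (G.graft p q w y).V.card = G.V.card + 1 :=
  Finset.card_insert_of_notMem hw

theorem not_hasParallel_iff : ¬ G.HasParallel ↔ G.E.Nodup := by
  simp [HasParallel, Multiset.nodup_iff_count_le_one]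

theorem nodup_subdivide (hG : G.E.Nodup) (hE : G.EdgesIn) (hu : u ∉ G.V) (hab : a ≠ b) :
    (G.subdivide a b u).E.Nodup := by
  have hrest : ∀ f ∈ G.E.erase s(a, b), u ∉ f :=
    fun f hf => hE.not_mem_of_not_mem hu (Multiset.mem_of_mem_erase hf)
  simp only [subdivide, Multiset.nodup_cons, Multiset.mem_cons, not_or]
  exact ⟨⟨by simp; omega, fun h => hrest _ h (Sym2.mem_mk_right _ _)⟩,
    fun h => hrest _ h (Sym2.mem_mk_left _ _), hG.erase _⟩

theorem nodup_graft (hG : G.E.Nodup) (hE : G.EdgesIn) (hw : w ∉ G.V) (hpq : p ≠ q)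
    (hpy : p ≠ y) (hqy : q ≠ y) : (G.graft p q w y).E.Nodup := by
  refine Multiset.nodup_cons.2 ⟨?_, nodup_subdivide hG hE hw hpq⟩
  simp only [subdivide, Multiset.mem_cons, not_or]
  refine ⟨by simp; omega, by simp; omega,
    fun h => hE.not_mem_of_not_mem hw (Multiset.mem_of_mem_erase h) (Sym2.mem_mk_left _ _)⟩

/-! ### NNI moves -/

theorem suppress_subdivide (hE : G.EdgesIn) (he : s(a, b) ∈ G.E) (hu : u ∉ G.V) :
    Suppress (G.subdivide a b u) u G := by
  have hrest : (G.E.erase s(a, b)).filter (u ∈ ·) = 0 :=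
    Multiset.filter_eq_nil.2 fun f hf => hE.not_mem_of_not_mem hu (Multiset.mem_of_mem_erase hf)
  refine ⟨a, b, ?_, (Finset.erase_insert hu).symm, ?_⟩
  · simp [subdivide, hrest, Sym2.eq_swap]
  · simp only [subdivide]
    rw [show s(u, a) = s(a, u) from Sym2.eq_swap, Multiset.erase_cons_head,
      Multiset.erase_cons_head, Multiset.cons_erase he]

theorem Suppress.eq_subdivide (hv : v ∈ G.V) (h : Suppress G v G') :
    ∃ a b, s(a, b) ∈ G'.E ∧ v ∉ G'.V ∧ G = G'.subdivide a b v := by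
  obtain ⟨a, b, hf, hV, hE⟩ := h
  have hG : G.E = s(v, a) ::ₘ s(v, b) ::ₘ G.E.filter (v ∉ ·) := by
    conv_lhs => rw [← Multiset.filter_add_not (v ∈ ·) G.E, hf, Multiset.cons_add,
      Multiset.singleton_add]
  refine ⟨a, b, hE ▸ Multiset.mem_cons_self _ _, hV ▸ Finset.notMem_erase v G.V, ext ?_ ?_⟩
  · rw [subdivide, hV, Finset.insert_erase hv]
  · simp only [subdivide, hE, Multiset.erase_cons_head]
    rw [hG, Multiset.erase_cons_head, Multiset.erase_cons_head, Sym2.eq_swap (a := a)]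

theorem nniMinusAt_graft (hE : G.EdgesIn) (hpq : s(p, q) ∈ G.E) (hw : w ∉ G.V)
    (hy : Suppress G y G') (hqy : s(q, y) ∈ G.E.erase s(p, q)) :
    NNIminusAt (G.graft p q w y) s(w, y) G' := by
  refine ⟨w, y, q, rfl, ?_, ?_, Multiset.mem_cons_self _ _, G, ?_, hy⟩
  · simp [graft, addEdge, subdivide]
  · simp only [graft, addEdge, subdivide, Multiset.mem_cons]
    exact .inr (.inr (.inr (by rwa [Sym2.eq_swap (a := y)])))
  · rw [graft, deleteEdge_addEdge]
    exact suppress_subdivide hE hpq hw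

theorem nniZeroAt_graft (hE : G.EdgesIn) (hL : G.Loopless) (hpq : s(p, q) ∈ G.E)
    (hqb : s(q, b) ∈ G.E) (hw : w ∉ G.V) (hqy : q ≠ y) (hq : G.deg q ≠ 1) :
    NNIzeroAt (G.graft p q w y) s(w, y) (G.graft q b w y) s(w, y) := by
  have hqw := (hE.ne_of_mem hw hpq).2
  refine ⟨w, q, y, b, w, G, G.subdivide q b w, rfl, rfl, Multiset.mem_cons_self _ _, ?_,
    fun h => ?_, fun h => ?_, hqy.symm, (hE.ne_of_mem hw hqb).2, ?_,
    subdivEdge_subdivide hqb hw, rfl, rfl⟩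
  · simp [graft, addEdge, subdivide]
  · have := h.2
    rw [graft, deg_addEdge, deg_subdivide_self hE hw, if_pos (Sym2.mem_mk_left w y)] at this
    omega
  · have := h.2
    rw [graft, deg_addEdge, deg_subdivide_of_ne hpq (hL.ne hpq) hqw, if_neg (by simp [hqw, hqy])]
      at this
    exact hq this
  · rw [graft, deleteEdge_addEdge]
    exact suppress_subdivide hE hpq hw

def NNIRemoval (D : MGraph → Prop) (k : ℕ) (N : MGraph) (e : Sym2 ℕ) (N' : MGraph) : Prop :=
  ∃ M f, SeqOn (fun p q : MGraph × Sym2 ℕ => NNIzeroAt p.1 p.2 q.1 q.2) (fun p => D p.1) k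
    (N, e) (M, f) ∧ NNIminusAt M f N'

theorem NNIminusAt.nniRemoval (h : NNIminusAt N e N') : NNIRemoval D 0 N e N' :=
  ⟨N, e, rfl, h⟩

theorem NNIRemoval.cons (h : NNIzeroAt N e N₁ e₁) (hD : D N₁) (hr : NNIRemoval D k N₁ e₁ N') :
    NNIRemoval D (k + 1) N e N' :=
  let ⟨M, f, hs, hm⟩ := hr
  ⟨M, f, ⟨(N₁, e₁), h, hD, hs⟩, hm⟩

theorem exists_nniRemoval_of_isPath (hE : G.EdgesIn) (hL : G.Loopless) (hw : w ∉ G.V)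
    (hy : Suppress G y G') (hD : ∀ p q, s(p, q) ∈ G.E → p ≠ y → q ≠ y → D (G.graft p q w y))
    (W : G.simpleGraph.Walk q y) (hW : W.IsPath) (hpq : s(p, q) ∈ G.E)
    (hpy : p ≠ y) (hqy : q ≠ y) (hq : G.deg q ≠ 1) :
    ∃ k < W.length, NNIRemoval D k (G.graft p q w y) s(w, y) G' := by
  induction W generalizing p with
  | nil => exact absurd rfl hqy
  | @cons q c z hqc W' ih =>
    obtain ⟨hqc', hqc⟩ := simpleGraph_adj.1 hqc
    obtain ⟨hW', hqW'⟩ := (SimpleGraph.Walk.cons_isPath_iff _ _).1 hW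
    by_cases hcz : c = z
    · subst hcz
      refine ⟨0, by simp, (nniMinusAt_graft hE hpq hw hy ?_).nniRemoval⟩
      refine (Multiset.mem_erase_of_ne fun h => ?_).2 hqc
      rcases Sym2.eq_iff.1 h with ⟨-, h⟩ | ⟨-, h⟩
      exacts [hqy h.symm, hpy h.symm]
    cases W' with
    | nil => exact absurd rfl hcz
    | @cons _ d _ hcd W'' =>
      have hc : G.deg c ≠ 1 := fun hc => by
        have := eq_of_deg_eq_one hc hqc (simpleGraph_adj.1 hcd).2 (Sym2.mem_mk_right q c)
          (Sym2.mem_mk_left c d)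
        rcases Sym2.eq_iff.1 this with ⟨h, -⟩ | ⟨rfl, -⟩
        · exact hqc' h
        · exact hqW' (by simp)
      obtain ⟨k, hk, hr⟩ := ih hy hD hW' hqc hqy hcz hc
      exact ⟨k + 1, by simp at hk ⊢; omega,
        NNIRemoval.cons (nniZeroAt_graft hE hL hpq hqc hw hqy hq) (hD q c hqc hqy hcz) hr⟩

/-! ### Putting the removed edge back -/

/-- `N` is `N'` with the edge `{w, z}` put back: `z` subdivides `{c₁, c₂}` and `w` subdivides
`{p, q}`. -/
def IsGraftOf (N' N : MGraph) (c₁ c₂ z p q w : ℕ) : Prop :=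
  s(c₁, c₂) ∈ N'.E ∧ z ∉ N'.V ∧ s(p, q) ∈ (N'.subdivide c₁ c₂ z).E ∧
    w ∉ (N'.subdivide c₁ c₂ z).V ∧ N = (N'.subdivide c₁ c₂ z).graft p q w z

theorem RemoveEdge.exists_isGraftOf (hE : N.EdgesIn) (hL : N.Loopless) (h : RemoveEdge N x y N') :
    ∃ c₁ c₂ p q, IsGraftOf N' N c₁ c₂ y p q x := by
  obtain ⟨hxy, G₁, h₁, h₂⟩ := h
  obtain ⟨p, q, hpq, hx, hN⟩ :=
    Suppress.eq_subdivide (G := N.deleteEdge s(x, y)) (hE _ hxy x (Sym2.mem_mk_left x y)) h₁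
  have hy : y ∈ G₁.V := by
    have : y ∈ (G₁.subdivide p q x).V := hN ▸ hE _ hxy y (Sym2.mem_mk_right x y)
    exact (Finset.mem_insert.1 this).resolve_left (hL.ne hxy).symm
  obtain ⟨c₁, c₂, hc, hy', rfl⟩ := h₂.eq_subdivide hy
  exact ⟨c₁, c₂, p, q, hc, hy', hpq, hx, by rw [graft, ← hN, addEdge_deleteEdge hxy]⟩

theorem IsGraftOf.comm (h : IsGraftOf N' N c₁ c₂ z p q w) : IsGraftOf N' N c₁ c₂ z q p w := by
  obtain ⟨hc, hz, hpq, hw, rfl⟩ := h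
  exact ⟨hc, hz, Sym2.eq_swap ▸ hpq, hw, graft_comm _ _ _ _ _⟩

theorem IsGraftOf.comm_base (h : IsGraftOf N' N c₁ c₂ z p q w) :
    IsGraftOf N' N c₂ c₁ z p q w := by
  obtain ⟨hc, hz, hpq, hw, rfl⟩ := h
  rw [subdivide_comm] at hpq hw ⊢
  exact ⟨Sym2.eq_swap ▸ hc, hz, hpq, hw, rfl⟩

/-- The same graph, with the roles of the two ends `x` and `y` exchanged. -/
theorem IsGraftOf.swap (h : IsGraftOf N' N a c y a y x) : IsGraftOf N' N a c x x c y := by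
  obtain ⟨hc, hy, -, hx, rfl⟩ := h
  rw [subdivide, Finset.mem_insert, not_or] at hx
  refine ⟨hc, hx.2, by simp [subdivide], ?_, ext (Finset.insert_comm _ _ _) ?_⟩
  · simp [subdivide, hy, Ne.symm hx.1]
  · have hR : (s(a, x) ::ₘ s(x, c) ::ₘ N'.E.erase s(a, c)).erase s(x, c) =
        s(a, x) ::ₘ N'.E.erase s(a, c) := by
      by_cases hac : s(a, x) = s(x, c)
      · rw [hac, Multiset.erase_cons_head]
      · rw [Multiset.erase_cons_tail _ hac, Multiset.erase_cons_head]
    simp only [graft, addEdge, subdivide, Multiset.erase_cons_head, hR, Sym2.eq_swap (a := y)]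
    simp only [← Multiset.singleton_add]
    abel

theorem IsGraftOf.exists_swap (hn : 3 ≤ n) (hN' : IsNetwork n N') (h : IsGraftOf N' N c₁ c₂ y p y x)
    (hpy : p ≠ y) (hp : N'.deg p = 1) :
    ∃ c, IsGraftOf N' N p c x x c y ∧ c ≠ x ∧ (N'.subdivide p c x).deg c ≠ 1 := by
  obtain ⟨hE', hL', -⟩ := hN'.1
  have : ∃ c, IsGraftOf N' N p c y p y x := by
    have hpy' := h.2.2.1
    simp only [subdivide, Multiset.mem_cons] at hpy'
    rcases hpy' with h' | h' | h'
    · obtain rfl : p = c₁ := by simpa [Sym2.eq_iff, hpy] using h'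
      exact ⟨c₂, h⟩
    · obtain rfl : p = c₂ := by simpa [Sym2.eq_iff, hpy] using h'
      exact ⟨c₁, h.comm_base⟩
    · exact absurd (hE' _ (Multiset.mem_of_mem_erase h') y (Sym2.mem_mk_right p y)) h.2.1
  obtain ⟨c, h⟩ := this
  obtain ⟨hpc, hx, -⟩ := h.swap
  have hcx : c ≠ x := (hE'.ne_of_mem hx hpc).2
  refine ⟨c, h.swap, hcx, ?_⟩
  rw [deg_subdivide_of_ne hpc (hL'.ne hpc) hcx]
  exact hN'.1.deg_ne_one_of_adj hn hpc hp

theorem IsGraftOf.exists_movable (hn : 3 ≤ n) (hN' : IsNetwork n N')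
    (h : IsGraftOf N' N c₁ c₂ y p q x) :
    ∃ w z c₁ c₂ p q, s(w, z) = s(x, y) ∧ IsGraftOf N' N c₁ c₂ z p q w ∧ q ≠ z ∧
      (N'.subdivide c₁ c₂ z).deg q ≠ 1 := by
  by_cases hq : q ≠ y ∧ (N'.subdivide c₁ c₂ y).deg q ≠ 1
  · exact ⟨x, y, c₁, c₂, p, q, rfl, h, hq⟩
  by_cases hp : p ≠ y ∧ (N'.subdivide c₁ c₂ y).deg p ≠ 1
  · exact ⟨x, y, c₁, c₂, q, p, rfl, h.comm, hp⟩
  push Not at hp hq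
  obtain ⟨hE', hL', -⟩ := hN'.1
  have ⟨hc, hy, hpq, _⟩ := h
  have hdeg : ∀ t ≠ y, (N'.subdivide c₁ c₂ y).deg t = N'.deg t :=
    fun t ht => deg_subdivide_of_ne hc (hL'.ne hc) ht
  have hpq' : p ≠ q :=
    (loopless_subdivide hL' (hE'.ne_of_mem hy hc).1 (hE'.ne_of_mem hy hc).2).ne hpq
  rcases eq_or_ne q y with rfl | hqy
  · obtain ⟨c, h', hcx, hdc⟩ := h.exists_swap hn hN' hpq' ((hdeg p hpq').symm.trans (hp hpq'))
    exact ⟨q, x, p, c, x, c, Sym2.eq_swap, h', hcx, hdc⟩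
  rcases eq_or_ne p y with rfl | hpy
  · obtain ⟨c, h', hcx, hdc⟩ :=
      h.comm.exists_swap hn hN' hpq'.symm ((hdeg q hqy).symm.trans (hq hqy))
    exact ⟨p, x, q, c, x, c, Sym2.eq_swap, h', hcx, hdc⟩
  exact (hN'.1.deg_ne_one_of_adj hn (mem_of_mem_subdivide hpq hpy hqy)
    ((hdeg p hpy).symm.trans (hp hpy)) ((hdeg q hqy).symm.trans (hq hqy))).elim

theorem IsGraftOf.isNetworkR_graft (hN' : IsNetwork n N') (hN : IsNetworkR n r N)
    (h : IsGraftOf N' N c₁ c₂ z p q w) (hab : s(a, b) ∈ (N'.subdivide c₁ c₂ z).E) :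
    IsNetworkR n r ((N'.subdivide c₁ c₂ z).graft a b w z) := by
  obtain ⟨hc, hz, hpq, hw, rfl⟩ := h
  refine ⟨isNetwork_graft hN' hc hz hab hw, ?_⟩
  have := hN.2
  rw [card_E_graft hpq, card_V_graft hw] at this
  rw [card_E_graft hab, card_V_graft hw, this]

theorem IsGraftOf.nodup_graft (hN' : IsNetwork n N') (h : IsGraftOf N' N c₁ c₂ z p q w)
    (hnd : N'.E.Nodup) (hab : s(a, b) ∈ (N'.subdivide c₁ c₂ z).E) (haz : a ≠ z) (hbz : b ≠ z) :
    ((N'.subdivide c₁ c₂ z).graft a b w z).E.Nodup := by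
  obtain ⟨hc, hz, -, hw, -⟩ := h
  obtain ⟨⟨hE', hL', -⟩, -⟩ := hN'
  have hLQ := loopless_subdivide hL' (hE'.ne_of_mem hz hc).1 (hE'.ne_of_mem hz hc).2
  exact MGraph.nodup_graft (nodup_subdivide hnd hE' hz (hL'.ne hc)) (edgesIn_subdivide hE' hc) hw
    (hLQ.ne hab) haz hbz

theorem IsGraftOf.exists_nniRemoval (hN' : IsNetwork n N') (h : IsGraftOf N' N c₁ c₂ z p q w)
    (hqz : q ≠ z) (hq : (N'.subdivide c₁ c₂ z).deg q ≠ 1)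
    (hD : ∀ p q, s(p, q) ∈ (N'.subdivide c₁ c₂ z).E → p ≠ z → q ≠ z →
      D ((N'.subdivide c₁ c₂ z).graft p q w z)) :
    ∃ k < N.V.card, NNIRemoval D k N s(w, z) N' := by
  obtain ⟨hc, hz, hpq, hw, rfl⟩ := h
  obtain ⟨⟨hE', hL', hC', -, hdeg', -⟩, -⟩ := hN'
  set Q := N'.subdivide c₁ c₂ z
  have hEQ : Q.EdgesIn := edgesIn_subdivide hE' hc
  have hLQ : Q.Loopless := loopless_subdivide hL' (hE'.ne_of_mem hz hc).1 (hE'.ne_of_mem hz hc).2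
  have hsupp : Suppress Q z N' := suppress_subdivide hE' hc hz
  have hqV : q ∈ Q.V := hEQ _ hpq q (Sym2.mem_mk_right p q)
  have hcard : Q.V.card < (Q.graft p q w z).V.card := by rw [card_V_graft hw]; omega
  by_cases hpz : p = z
  · -- `{w, z}` is doubled, and one move onto `{q, b}` puts it in the triangle `w q z`.
    subst hpz
    have hq3 : Q.deg q = 3 := by
      rw [deg_subdivide_of_ne hc (hL'.ne hc) hqz] at hq ⊢
      exact (hdeg' q ((Finset.mem_insert.1 hqV).resolve_left hqz)).resolve_left hq
    obtain ⟨b, hqb, hbz⟩ := exists_mem_ne_of_deg_eq_three hq3 (deg_subdivide_self hE' hz)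
    have hqp : s(q, p) ∈ Q.E.erase s(b, q) := by
      refine (Multiset.mem_erase_of_ne fun h => ?_).2 (Sym2.eq_swap ▸ hpq)
      rcases Sym2.eq_iff.1 h with ⟨-, h⟩ | ⟨-, h⟩
      exacts [hqz h.symm, hbz h.symm]
    refine ⟨1, by have := Finset.card_pos.2 ⟨q, hqV⟩; omega,
      NNIRemoval.cons (nniZeroAt_graft hEQ hLQ hpq hqb hw hqz hq) (hD q b hqb hqz hbz) ?_⟩
    rw [graft_comm]
    exact (nniMinusAt_graft hEQ (Sym2.eq_swap ▸ hqb) hw hsupp hqp).nniRemoval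
  · obtain ⟨W⟩ := (conn_subdivide hC' (hE' _ hc c₂ (Sym2.mem_mk_right c₁ c₂)) q hqV z
      (Finset.mem_insert_self z N'.V)).reachable
    obtain ⟨k, hk, hr⟩ :=
      exists_nniRemoval_of_isPath hEQ hLQ hw hsupp hD W.toPath.1 W.toPath.2 hpq hpz hqz hq
    exact ⟨k, by have := hEQ.length_lt_card hqV W.toPath.2; omega, hr⟩

end MGraph

/-- For n ≥ 3, a single PR⁻ removing the edge e = {x,y} of N
(reticulation number r) can be replaced by an NNI⁰-sequence that only moves e,
followed by one NNI⁻ removing it, of total length O(n+r); if neither N nor N'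
has parallel edges, neither do the intermediate networks. -/
theorem prm_to_nni :
    ∃ c : ℕ, ∀ (n r : ℕ) (N N' : MGraph) (x y : ℕ),
      3 ≤ n → IsNetworkR n r N → IsNetwork n N' → RemoveEdge N x y N' →
      (∃ k ≤ c * (n + r + 1), ∃ (M : MGraph) (f' : Sym2 ℕ),
        SeqOn (fun p q : MGraph × Sym2 ℕ => NNIzeroAt p.1 p.2 q.1 q.2)
          (fun p : MGraph × Sym2 ℕ => IsNetworkR n r p.1) k
          (N, s(x, y)) (M, f') ∧
        NNIminusAt M f' N') ∧
      (¬ HasParallel N → ¬ HasParallel N' →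
        ∃ k ≤ c * (n + r + 1), ∃ (M : MGraph) (f' : Sym2 ℕ),
        SeqOn (fun p q : MGraph × Sym2 ℕ => NNIzeroAt p.1 p.2 q.1 q.2)
          (fun p : MGraph × Sym2 ℕ => IsNetworkR n r p.1 ∧ ¬ HasParallel p.1) k
          (N, s(x, y)) (M, f') ∧
        NNIminusAt M f' N') := by
  refine ⟨2, fun n r N N' x y hn hN hN' hrem => ?_⟩
  obtain ⟨c₁, c₂, p, q, hg⟩ := hrem.exists_isGraftOf hN.1.1.1 hN.1.1.2.1
  obtain ⟨w, z, c₁, c₂, p, q, hwz, hg, hqz, hq⟩ := hg.exists_movable hn hN'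
  have hcard := hN.card_V_le
  rw [← hwz]
  refine ⟨?_, fun _ hpar' => ?_⟩
  · obtain ⟨k, hk, hr⟩ := hg.exists_nniRemoval hN' hqz hq
      fun a b hab _ _ => hg.isNetworkR_graft hN' hN hab
    exact ⟨k, by omega, hr⟩
  · obtain ⟨k, hk, hr⟩ := hg.exists_nniRemoval (D := fun M => IsNetworkR n r M ∧ ¬ HasParallel M)
      hN' hqz hq fun a b hab haz hbz =>
      ⟨hg.isNetworkR_graft hN' hN hab,
        not_hasParallel_iff.2 (hg.nodup_graft hN' (not_hasParallel_iff.1 hpar') hab haz hbz)⟩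
    exact ⟨k, by omega, hr⟩
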